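/- arXiv:2510.18194 — 3 statements merged into one kernel-verified Lean document; each statement's English description precedes it below -/
import Mathlib

section
/- Let ℓ be a prime and let G be a subgroup of the upper-triangular Borel subgroup of GL₂(𝔽_ℓ) whose order is divisible by ℓ. Then a subgroup H of G is normal in G if and only if either the unipotent matrix U = [[1,1],[0,1]] belongs to H, or every element [[a,b],[0,d]] of H satisfies a = d. -/
/-!
Inside the Borel subgroup `B`, the diagonal map `B → K × K` is a homomorphism to a commutative
monoid whose fibre over `1` is the unipotent group `N = {U c = !![1, c; 0, 1]}`, so every
commutator of `B` lies in `N` and any `H ≤ B` containing `N` is normalized by `B`.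

Conversely, Cauchy's theorem gives an element of order `ℓ` in `G`; by Fermat its diagonal is
trivial, so it is some `U c` with `c ≠ 0`. If `H` is normalized by `G` and contains
`h = !![a, b; 0, d]` with `a ≠ d`, then `H` contains the commutator `⁅U c, h⁆ = U (c (1 - a / d))`,
which generates `N ≅ 𝔽_ℓ`. Finally, if every `h ∈ H` has `a = d`, then `h = a • U (b / a)`, so
either `h` is scalar, hence central, or `h ^ (ℓ - 1) = U (-b / a)` again generates `N`.
-/

namespace Matrix.GeneralLinearGroup

variable {K : Type*} [Field K]

variable (K) in
def borelSubgroup : Subgroup (GL (Fin 2) K) where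
  carrier := {g | g 1 0 = 0}
  mul_mem' {g h} hg hh := by simp_all [Units.val_mul, mul_apply, Fin.sum_univ_two]
  one_mem' := by simp
  inv_mem' {g} hg := by simp_all [coe_units_inv, inv_def, adjugate_fin_two]

lemma mem_borelSubgroup {g : GL (Fin 2) K} : g ∈ borelSubgroup K ↔ g 1 0 = 0 := Iff.rfl

lemma diag_ne_zero_of_mem_borelSubgroup {g : GL (Fin 2) K} (hg : g ∈ borelSubgroup K) :
    g 0 0 ≠ 0 ∧ g 1 1 ≠ 0 := by
  have := g.det_ne_zero
  rw [det_fin_two, mem_borelSubgroup.1 hg, mul_zero, sub_zero] at this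
  exact mul_ne_zero_iff.1 this

variable (K) in
def borelDiag : borelSubgroup K →* K × K where
  toFun g := (g.1 0 0, g.1 1 1)
  map_one' := by simp
  map_mul' g h := by
    simp [Units.val_mul, mul_apply, Fin.sum_univ_two, mem_borelSubgroup.1 g.2,
      mem_borelSubgroup.1 h.2]

lemma eq_upperRightHom_of_borelDiag_eq_one {g : borelSubgroup K} (hg : borelDiag K g = 1) :
    (g : GL (Fin 2) K) = upperRightHom (g.1 0 1) := by
  simp only [borelDiag, MonoidHom.coe_mk, OneHom.coe_mk, Prod.mk_eq_one] at hg
  ext i j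
  fin_cases i <;> fin_cases j <;> simp [hg, mem_borelSubgroup.1 g.2]

lemma mul_mul_inv_mul_inv_mem_range_upperRightHom {g h : GL (Fin 2) K}
    (hg : g ∈ borelSubgroup K) (hh : h ∈ borelSubgroup K) :
    ∃ t, g * h * g⁻¹ * h⁻¹ = upperRightHom t := by
  set x : borelSubgroup K := ⟨g, hg⟩
  set y : borelSubgroup K := ⟨h, hh⟩
  suffices borelDiag K (x * y * x⁻¹ * y⁻¹) = 1 from
    ⟨_, eq_upperRightHom_of_borelDiag_eq_one this⟩
  -- the units of `K × K` form a commutative group, where commutators are trivial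
  have : (borelDiag K).toHomUnits (x * y * x⁻¹ * y⁻¹) = 1 := by
    simp only [map_mul, map_inv]
    rw [mul_inv_cancel_comm, mul_inv_cancel]
  exact congrArg Units.val this

lemma mul_upperRightHom_mul_inv {h : GL (Fin 2) K} (hh : h ∈ borelSubgroup K) (c : K) :
    h * upperRightHom c * h⁻¹ = upperRightHom (h 0 0 * c / h 1 1) := by
  have hd := (diag_ne_zero_of_mem_borelSubgroup hh).2
  rw [mul_inv_eq_iff_eq_mul]
  ext i j
  fin_cases i <;> fin_cases j <;>
    simp [mul_apply, Fin.sum_univ_two, mem_borelSubgroup.1 hh, hd]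
  ring

lemma upperRightHom_mul_mul_inv_mul_inv {h : GL (Fin 2) K} (hh : h ∈ borelSubgroup K) (c : K) :
    upperRightHom c * h * (upperRightHom c)⁻¹ * h⁻¹ =
      upperRightHom (c * (1 - h 0 0 / h 1 1)) := by
  rw [mul_assoc, mul_assoc, ← mul_assoc h, ← AddChar.map_neg_eq_inv,
    mul_upperRightHom_mul_inv hh, ← AddChar.map_add_eq_mul]
  ring_nf

lemma eq_scalar_mul_upperRightHom {g : GL (Fin 2) K} (hg : g ∈ borelSubgroup K)
    (hd : g 0 0 = g 1 1) :
    g = scalar (Fin 2) (Units.mk0 (g 0 0) (diag_ne_zero_of_mem_borelSubgroup hg).1) *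
      upperRightHom (g 0 1 / g 0 0) := by
  have ha := (diag_ne_zero_of_mem_borelSubgroup hg).1
  ext i j
  fin_cases i <;> fin_cases j <;> simp [mem_borelSubgroup.1 hg, ← hd, mul_div_cancel₀ _ ha]

lemma conj_mem_of_forall_upperRightHom_mem {H : Subgroup (GL (Fin 2) K)}
    (hH : H ≤ borelSubgroup K) (hN : ∀ c, upperRightHom c ∈ H) {g : GL (Fin 2) K}
    (hg : g ∈ borelSubgroup K) {h : GL (Fin 2) K} (hh : h ∈ H) : g * h * g⁻¹ ∈ H := by
  obtain ⟨t, ht⟩ := mul_mul_inv_mul_inv_mem_range_upperRightHom hg (hH hh)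
  rw [← inv_mul_cancel_right (g * h * g⁻¹) h, ht]
  exact H.mul_mem (hN t) hh

section ZMod

variable {ℓ : ℕ} [Fact ℓ.Prime]

lemma forall_upperRightHom_mem {H : Subgroup (GL (Fin 2) (ZMod ℓ))} {t : ZMod ℓ} (ht : t ≠ 0)
    (htH : upperRightHom t ∈ H) (c : ZMod ℓ) : upperRightHom c ∈ H := by
  have hc : (c / t).val • t = c := by
    rw [nsmul_eq_mul, ZMod.natCast_zmod_val, div_mul_cancel₀ c ht]
  rw [← hc, AddChar.map_nsmul_eq_pow]
  exact H.pow_mem htH _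

lemma exists_upperRightHom_eq_of_orderOf_eq {g : GL (Fin 2) (ZMod ℓ)}
    (hg : g ∈ borelSubgroup _) (ho : orderOf g = ℓ) : ∃ c ≠ 0, upperRightHom c = g := by
  set x : borelSubgroup (ZMod ℓ) := ⟨g, hg⟩
  have hx : borelDiag _ x = 1 := calc
    borelDiag _ x = borelDiag _ x ^ ℓ := by simp [borelDiag, ZMod.pow_card]
    _ = 1 := by
      have hxo : orderOf x = ℓ := (Subgroup.orderOf_mk g hg).trans ho
      rw [← map_pow, orderOf_dvd_iff_pow_eq_one.1 (by rw [hxo]), map_one]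
  have hgc : g = upperRightHom (g 0 1) := eq_upperRightHom_of_borelDiag_eq_one hx
  refine ⟨g 0 1, fun h0 => ?_, hgc.symm⟩
  rw [hgc, h0, AddChar.map_zero_eq_one, orderOf_one] at ho
  exact (Fact.out : ℓ.Prime).one_lt.ne ho

lemma scalar_mul_upperRightHom_pow_card_sub_one (u : (ZMod ℓ)ˣ) (b : ZMod ℓ) :
    (scalar (Fin 2) u * upperRightHom b) ^ (ℓ - 1) = upperRightHom (-b) := by
  have hℓ : ((ℓ - 1 : ℕ) : ZMod ℓ) = -1 := by
    simp [Nat.cast_sub (Fact.out : ℓ.Prime).one_le]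
  rw [Commute.mul_pow (scalar_commute u _), ← map_pow, ZMod.units_pow_card_sub_one_eq_one,
    map_one, one_mul, ← AddChar.map_nsmul_eq_pow, nsmul_eq_mul, hℓ, neg_one_mul]

lemma forall_upperRightHom_mem_of_conj_mem {H : Subgroup (GL (Fin 2) (ZMod ℓ))}
    (hH : H ≤ borelSubgroup _) {c : ZMod ℓ} (hc : c ≠ 0)
    (hconj : ∀ h ∈ H, upperRightHom c * h * (upperRightHom c)⁻¹ ∈ H)
    {h : GL (Fin 2) (ZMod ℓ)} (hh : h ∈ H) (hne : h 0 0 ≠ h 1 1) (t : ZMod ℓ) :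
    upperRightHom t ∈ H := by
  have hcomm := H.mul_mem (hconj h hh) (H.inv_mem hh)
  rw [upperRightHom_mul_mul_inv_mul_inv (hH hh)] at hcomm
  refine forall_upperRightHom_mem (mul_ne_zero hc (sub_ne_zero.2 fun h1 => hne ?_)) hcomm t
  exact (div_eq_one_iff_eq (diag_ne_zero_of_mem_borelSubgroup (hH hh)).2).1 h1.symm

lemma conj_mem_of_forall_diag_eq {H : Subgroup (GL (Fin 2) (ZMod ℓ))}
    (hH : H ≤ borelSubgroup _) (hdiag : ∀ h ∈ H, h 0 0 = h 1 1)
    {g : GL (Fin 2) (ZMod ℓ)} (hg : g ∈ borelSubgroup _) {h : GL (Fin 2) (ZMod ℓ)}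
    (hh : h ∈ H) :
    g * h * g⁻¹ ∈ H := by
  by_cases hb : ∀ h ∈ H, h 0 1 = 0
  · -- `h` is scalar, hence central
    have hscalar := eq_scalar_mul_upperRightHom (hH hh) (hdiag h hh)
    rw [hb h hh, zero_div, AddChar.map_zero_eq_one, mul_one] at hscalar
    rwa [hscalar, ← GeneralLinearGroup.scalar_commute, mul_inv_cancel_right, ← hscalar]
  push Not at hb
  obtain ⟨k, hk, hk01⟩ := hb
  have hpow := H.pow_mem hk (ℓ - 1)
  rw [eq_scalar_mul_upperRightHom (hH hk) (hdiag k hk),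
    scalar_mul_upperRightHom_pow_card_sub_one] at hpow
  refine conj_mem_of_forall_upperRightHom_mem hH (forall_upperRightHom_mem ?_ hpow) hg hh
  exact neg_ne_zero.2 (div_ne_zero hk01 (diag_ne_zero_of_mem_borelSubgroup (hH hk)).1)

end ZMod

end Matrix.GeneralLinearGroup

open Matrix.GeneralLinearGroup in
/-- Let `ℓ` be a prime and `G` a subgroup of the upper-triangular Borel
subgroup of `GL₂(𝔽_ℓ)` whose order is divisible by `ℓ`. A subgroup `H` of `G` is normal in `G`
iff either `U = !![1,1;0,1] ∈ H` or every element of `H` has equal diagonal entries. -/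
theorem stmt0 (ℓ : ℕ) [Fact ℓ.Prime]
    (G : Subgroup (GL (Fin 2) (ZMod ℓ)))
    (hG : ∀ g ∈ G, (g : GL (Fin 2) (ZMod ℓ)).val 1 0 = 0)
    (hord : ℓ ∣ Nat.card G)
    (H : Subgroup (GL (Fin 2) (ZMod ℓ))) (hHG : H ≤ G) :
    (∀ g ∈ G, ∀ h ∈ H, g * h * g⁻¹ ∈ H) ↔
      ((∃ u ∈ H, (u : GL (Fin 2) (ZMod ℓ)).val = !![1, 1; 0, 1]) ∨
        ∀ h ∈ H, (h : GL (Fin 2) (ZMod ℓ)).val 0 0 = (h : GL (Fin 2) (ZMod ℓ)).val 1 1) := by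
  have hGB : G ≤ borelSubgroup (ZMod ℓ) := hG
  have hHB : H ≤ borelSubgroup (ZMod ℓ) := hHG.trans hGB
  have hU : (∃ u ∈ H, u.val = !![1, 1; 0, 1]) ↔ ∀ c, upperRightHom c ∈ H :=
    ⟨fun ⟨u, hu, hval⟩ => forall_upperRightHom_mem one_ne_zero
      (by rwa [show upperRightHom 1 = u from Units.ext hval.symm]),
      fun hN => ⟨_, hN 1, rfl⟩⟩
  rw [hU]
  constructor
  · refine fun hnorm => or_iff_not_imp_right.2 fun hdiag => ?_
    push Not at hdiag
    obtain ⟨h, hh, hne⟩ := hdiag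
    obtain ⟨g, hg⟩ := exists_prime_orderOf_dvd_card' ℓ hord
    obtain ⟨c, hc, hgc⟩ :=
      exists_upperRightHom_eq_of_orderOf_eq (hGB g.2) ((Subgroup.orderOf_coe g).trans hg)
    exact forall_upperRightHom_mem_of_conj_mem hHB hc (fun k hk => hgc ▸ hnorm g g.2 k hk) hh hne
  · rintro (hN | hdiag) g hg h hh
    · exact conj_mem_of_forall_upperRightHom_mem hHB hN (hGB hg) hh
    · exact conj_mem_of_forall_diag_eq hHB hdiag (hGB hg) hh
end

section
/- Let ℓ be a prime, G a subgroup of the upper-triangular Borel subgroup of GL₂(𝔽_ℓ) with ℓ dividing |G|, and H a subgroup of G containing an element [[a,b],[0,d]] with a ≠ d. Then U = [[1,1],[0,1]] lies in the normal closure of H in G; in particular if H is normal in G then U ∈ H. -/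
/-! By Cauchy's theorem `G` contains an element of order `ℓ`. Its diagonal entries `x` satisfy
`x ^ ℓ = 1`, hence `x = 1` by Fermat, so it is a nontrivial unipotent `[1, b; 0, 1]`. Its
commutator with `h = [a, c; 0, d] ∈ H` is the unipotent `[1, b (d - a) / d; 0, 1]`, which lies in
the normal closure of `H` and is nontrivial since `a ≠ d`. The unipotents form a copy of the
additive group `𝔽_ℓ`, generated by any of its nonzero elements, so `U` is a power of it. -/

open Matrix Matrix.GeneralLinearGroup

lemma upperTriangular_pow_apply {R : Type*} [CommRing R] {M : Matrix (Fin 2) (Fin 2) R}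
    (hM : M 1 0 = 0) (n : ℕ) :
    (M ^ n) 1 0 = 0 ∧ (M ^ n) 0 0 = M 0 0 ^ n ∧ (M ^ n) 1 1 = M 1 1 ^ n := by
  induction n with
  | zero => simp
  | succ n ih =>
    obtain ⟨h10, h00, h11⟩ := ih
    simp [pow_succ, mul_apply, Fin.sum_univ_two, hM, h10, h00, h11]

lemma eq_upperRightHom_of_pow_card_eq_one {p : ℕ} [Fact p.Prime] {g : GL (Fin 2) (ZMod p)}
    (h10 : g 1 0 = 0) (hg : g ^ p = 1) : g = upperRightHom (g 0 1) := by
  have hpow : g.val ^ p = 1 := by simpa using congrArg Units.val hg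
  obtain ⟨-, h00, h11⟩ := upperTriangular_pow_apply h10 p
  rw [hpow, ZMod.pow_card] at h00 h11
  ext i j
  fin_cases i <;> fin_cases j <;> simp [← h00, ← h11, h10]

lemma exists_upperRightHom_mem_of_dvd_card {p : ℕ} [Fact p.Prime]
    {G : Subgroup (GL (Fin 2) (ZMod p))} (hG : ∀ g ∈ G, g 1 0 = 0) (hp : p ∣ Nat.card G) :
    ∃ b ≠ 0, upperRightHom b ∈ G := by
  obtain ⟨⟨g, hgG⟩, hg⟩ := exists_prime_orderOf_dvd_card' p hp
  rw [Subgroup.orderOf_mk] at hg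
  have hgb := eq_upperRightHom_of_pow_card_eq_one (hG g hgG)
    (orderOf_dvd_iff_pow_eq_one.mp (dvd_of_eq hg))
  refine ⟨g 0 1, fun hb => ?_, hgb ▸ hgG⟩
  rw [hb, AddChar.map_zero_eq_one, ← orderOf_eq_one_iff, hg] at hgb
  exact (Fact.out : p.Prime).one_lt.ne' hgb

lemma apply_one_one_ne_zero_of_apply_one_zero_eq_zero {K : Type*} [Field K]
    {h : GL (Fin 2) K} (h10 : h 1 0 = 0) : h 1 1 ≠ 0 := by
  intro h11
  simpa [det_fin_two, h10, h11] using h.det_ne_zero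

lemma upperRightHom_commutator {K : Type*} [Field K] (b : K) {h : GL (Fin 2) K}
    (h10 : h 1 0 = 0) :
    upperRightHom b * h * (upperRightHom b)⁻¹ * h⁻¹ =
      upperRightHom (b * (h 1 1 - h 0 0) / h 1 1) := by
  have h11 := apply_one_one_ne_zero_of_apply_one_zero_eq_zero h10
  rw [mul_inv_eq_iff_eq_mul, ← AddChar.map_neg_eq_inv]
  ext i j
  fin_cases i <;> fin_cases j <;> simp [mul_apply, Fin.sum_univ_two, vecMul, dotProduct, h10]
  field_simp
  ring

lemma upperRightHom_mem_of_mem {p : ℕ} [Fact p.Prime] (N : Subgroup (GL (Fin 2) (ZMod p)))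
    {t : ZMod p} (ht : t ≠ 0) (htN : upperRightHom t ∈ N) (s : ZMod p) :
    upperRightHom s ∈ N := by
  have hs : s = (s / t).val • t := by
    rw [nsmul_eq_mul, ZMod.natCast_zmod_val, div_mul_cancel₀ s ht]
  rw [hs, AddChar.map_nsmul_eq_pow]
  exact pow_mem htN _

/-- For `G` a subgroup of the Borel of `GL₂(𝔽_ℓ)` with `ℓ ∣ |G|` and `H ≤ G`
containing an element with distinct diagonal entries, `U = !![1,1;0,1]` lies in the normal
closure of `H` in `G`; in particular if `H` is normal in `G` then `U ∈ H`. -/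
theorem stmt2 (ℓ : ℕ) [Fact ℓ.Prime]
    (G : Subgroup (GL (Fin 2) (ZMod ℓ)))
    (hG : ∀ g ∈ G, (g : GL (Fin 2) (ZMod ℓ)).val 1 0 = 0)
    (hord : ℓ ∣ Nat.card G)
    (H : Subgroup (GL (Fin 2) (ZMod ℓ))) (hHG : H ≤ G)
    (hex : ∃ h ∈ H, (h : GL (Fin 2) (ZMod ℓ)).val 0 0 ≠ (h : GL (Fin 2) (ZMod ℓ)).val 1 1) :
    (∃ u ∈ Subgroup.closure {x : GL (Fin 2) (ZMod ℓ) | ∃ g ∈ G, ∃ h ∈ H, x = g * h * g⁻¹},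
        (u : GL (Fin 2) (ZMod ℓ)).val = !![1, 1; 0, 1]) ∧
      ((∀ g ∈ G, ∀ h ∈ H, g * h * g⁻¹ ∈ H) →
        ∃ u ∈ H, (u : GL (Fin 2) (ZMod ℓ)).val = !![1, 1; 0, 1]) := by
  set N := Subgroup.closure {x : GL (Fin 2) (ZMod ℓ) | ∃ g ∈ G, ∃ h ∈ H, x = g * h * g⁻¹}
  obtain ⟨b, hb, hbG⟩ := exists_upperRightHom_mem_of_dvd_card hG hord
  obtain ⟨h, hhH, hdiag⟩ := hex
  have h10 : h 1 0 = 0 := hG h (hHG hhH)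
  have hcomm : upperRightHom b * h * (upperRightHom b)⁻¹ * h⁻¹ ∈ N :=
    mul_mem (Subgroup.subset_closure ⟨_, hbG, h, hhH, rfl⟩)
      (inv_mem (Subgroup.subset_closure ⟨1, G.one_mem, h, hhH, by simp⟩))
  rw [upperRightHom_commutator b h10] at hcomm
  have hU : upperRightHom 1 ∈ N := upperRightHom_mem_of_mem N
    (div_ne_zero (mul_ne_zero hb (sub_ne_zero.mpr hdiag.symm))
      (apply_one_one_ne_zero_of_apply_one_zero_eq_zero h10)) hcomm 1
  refine ⟨⟨_, hU, rfl⟩, fun hnormal => ⟨upperRightHom 1, ?_, rfl⟩⟩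
  exact (Subgroup.closure_le H).mpr (by rintro _ ⟨g, hg, k, hk, rfl⟩; exact hnormal g hg k hk) hU
end

section
/- Let ℓ be a prime and G a subgroup of GL₂(𝔽_ℓ) contained in the normalizer N of a Cartan subgroup C, with [N : C] = 2 and G non-abelian. Suppose H ≤ G is a non-normal subgroup of odd prime index p = [G : H] with ℓ ∤ |H|, H cyclic generated by a matrix of the form [[a₀, b₀],[0,1]] with a₀ ≠ 1. Then, after a change of basis, H = ⟨diag(a₀,1)⟩, a₀ = −1, |H| = 2, G ∩ C has order p, G is the semidirect product of H acting on M := G ∩ C by inversion, and det G = {±1}. -/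
/-!
Since `C` has index 2 in its normalizer and `G` is not abelian, `M = G ∩ C` has index 2 in `G`;
as `[G : H] = p` is odd, `G = M H`. The square of the generator `h₀` lies in `C`; were
`a₀ ^ 2 ≠ 1`, the upper triangular matrix `h₀ ^ 2` would have distinct eigenvalues, so its
centralizer, which contains `M` and `h₀`, would be commutative and `G` abelian. Hence `a₀ = -1`
and `h₀` is an involution, so `|H| = 2` and `|M| = p`. Conjugation by `h₀` is an automorphism of
order 2 of the cyclic group `M` which is not the identity; for each `m`, `m · h₀ m h₀⁻¹` is fixed
by it, hence trivial, so `h₀` acts by inversion. Then `det m = det m⁻¹` has order dividing both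
`2` and `p`, so `det M = 1` and `det G = {1, det h₀} = {±1}`.
-/

namespace Subgroup

variable {G : Type*} [Group G]

theorem sq_mem_of_relIndex_normalizer_eq_two {C : Subgroup G}
    (hC : C.relIndex (normalizer (C : Set G)) = 2) {g : G} (hg : g ∈ normalizer (C : Set G)) :
    g ^ 2 ∈ C := by
  have := pow_index_mem (C.subgroupOf (normalizer (C : Set G))) ⟨g, hg⟩
  rwa [← relIndex, hC, mem_subgroupOf] at this

theorem inf_relIndex_eq_two {C K : Subgroup G} (hC : C.relIndex (normalizer (C : Set G)) = 2)
    (hK : K ≤ normalizer (C : Set G)) (hKC : ¬ K ≤ C) : (K ⊓ C).relIndex K = 2 := by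
  have hdvd : (K ⊓ C).relIndex K ∣ 2 := by
    rw [← hC, inf_comm, inf_relIndex_right, ← relIndex_subgroupOf hK]
    exact relIndex_dvd_index_of_normal _ _
  exact ((Nat.dvd_prime Nat.prime_two).mp hdvd).resolve_left
    fun h ↦ hKC ((relIndex_eq_one.mp h).trans inf_le_right)

theorem sup_eq_of_coprime_relIndex {A B K : Subgroup G} (hA : A ≤ K) (hB : B ≤ K)
    (h : (A.relIndex K).Coprime (B.relIndex K)) : A ⊔ B = K := by
  refine le_antisymm (sup_le hA hB) (relIndex_eq_one.mp (Nat.eq_one_of_dvd_coprimes h ?_ ?_))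
  · exact relIndex_dvd_of_le_left K le_sup_left
  · exact relIndex_dvd_of_le_left K le_sup_right

theorem le_centralizer_sup_zpowers {M : Subgroup G} {h : G} (hM : M ≤ centralizer M)
    (hh : h ∈ centralizer M) : M ⊔ zpowers h ≤ centralizer (M ⊔ zpowers h : Subgroup G) := by
  have hMh : M ≤ centralizer (zpowers h : Subgroup G) := by
    rwa [le_centralizer_iff, zpowers_le]
  have hh' : zpowers h ≤ centralizer (zpowers h : Subgroup G) :=
    le_centralizer_iff_isMulCommutative.mpr inferInstance
  exact sup_le (le_centralizer_iff.mp (sup_le hM (zpowers_le.mpr hh)))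
    (le_centralizer_iff.mp (sup_le hMh hh'))

theorem eq_of_mem_zpowers_of_sq_eq_one {h x : G} (hh : h ^ 2 = 1) (hx : x ∈ zpowers h)
    (hx1 : x ≠ 1) : x = h := by
  obtain ⟨k, rfl⟩ := mem_zpowers_iff.mp hx
  rw [zpow_eq_zpow_emod' k hh, Nat.cast_ofNat] at hx1 ⊢
  rcases Int.emod_two_eq_zero_or_one k with hk | hk <;> rw [hk] at hx1 ⊢
  · exact absurd (zpow_zero h) hx1
  · exact zpow_one h

theorem conj_eq_inv_of_card_eq_prime {p : ℕ} [hp : Fact p.Prime] {M : Subgroup G}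
    (hM : Nat.card M = p) {h : G} (hh : h ^ 2 = 1) (hnorm : h ∈ normalizer (M : Set G))
    (hnc : h ∉ centralizer (M : Set G)) {m : G} (hm : m ∈ M) : h * m * h⁻¹ = m⁻¹ := by
  have : Finite M := Nat.finite_of_card_ne_zero (hM ▸ hp.out.ne_zero)
  have : IsCyclic M := isCyclic_of_prime_card hM
  have hMcomm : ∀ a ∈ M, ∀ b ∈ M, a * b = b * a := fun a ha b hb ↦
    congrArg Subtype.val (IsCyclic.commGroup.mul_comm (⟨a, ha⟩ : M) ⟨b, hb⟩)
  have hfix : M ⊓ centralizer {h} = ⊥ := by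
    rcases (Nat.dvd_prime hp.out).mp (hM ▸ card_dvd_of_le (inf_le_left (b := centralizer {h})))
      with hone | hcard
    · exact eq_bot_of_card_eq _ hone
    · have hMF : M ≤ centralizer {h} :=
        inf_eq_left.mp (eq_of_le_of_card_ge inf_le_left (hM.trans hcard.symm).le)
      exact absurd (mem_centralizer_iff.mpr fun m hm ↦
        mem_centralizer_singleton_iff.mp (hMF hm)) hnc
  have hinv : h⁻¹ = h := inv_eq_of_mul_eq_one_right (by rw [← sq, hh])
  have hm' : h * m * h⁻¹ ∈ M := (mem_normalizer_iff.mp hnorm m).mp hm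
  have hfixed : m * (h * m * h⁻¹) ∈ M ⊓ centralizer {h} := by
    refine ⟨mul_mem hm hm', mem_centralizer_singleton_iff.mpr ?_⟩
    calc m * (h * m * h⁻¹) * h = h * m * h⁻¹ * m * h := by rw [hMcomm m hm _ hm']
      _ = h * (m * (h * m * h⁻¹)) := by simp only [hinv, mul_assoc]
  rw [hfix, mem_bot] at hfixed
  exact eq_inv_of_mul_eq_one_right hfixed

theorem card_mul_relIndex {H K : Subgroup G} (h : H ≤ K) :
    Nat.card H * H.relIndex K = Nat.card K := by
  rw [← relIndex_bot_left, ← relIndex_bot_left, relIndex_mul_relIndex ⊥ H K bot_le h]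

end Subgroup

theorem MonoidHom.map_eq_one_of_conj_eq_inv {G A : Type*} [Group G] [CommGroup A] (f : G →* A)
    {h m : G} {n : ℕ} (hn : Odd n) (hconj : h * m * h⁻¹ = m⁻¹) (hm : m ^ n = 1) : f m = 1 := by
  have hsq : f m ^ 2 = 1 := by
    have := congrArg f hconj
    rw [map_mul, map_mul, map_inv, map_inv, mul_inv_cancel_comm] at this
    rw [sq]
    nth_rewrite 1 [this]
    exact inv_mul_cancel _
  have hpow : f m ^ n = 1 := by rw [← map_pow, hm, map_one]
  simpa [(Nat.coprime_two_left.mpr hn).gcd_eq_one] using pow_gcd_eq_one.mpr ⟨hsq, hpow⟩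

namespace Matrix

variable {K : Type*} [Field K]

theorem eq_smul_one_add_smul_of_commute_triangular {e f : K} (he : e ≠ 1)
    {A : Matrix (Fin 2) (Fin 2) K} (hA : Commute A !![e, f; 0, 1]) :
    A = A 1 1 • 1 + ((A 0 0 - A 1 1) / (e - 1)) • (!![e, f; 0, 1] - 1) := by
  have he' : e - 1 ≠ 0 := sub_ne_zero.mpr he
  have h01 := congrFun (congrFun hA.eq 0) 1
  have h10 := congrFun (congrFun hA.eq 1) 0
  simp only [mul_apply, of_apply, cons_val', cons_val_one, cons_val_fin_one, Fin.sum_univ_two,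
    cons_val_zero, mul_one, mul_zero, add_zero, zero_mul, one_mul, zero_add] at h01 h10
  have hA10 : A 1 0 = 0 := by
    simpa [he'] using (show A 1 0 * (e - 1) = 0 by linear_combination h10)
  ext i j
  fin_cases i <;> fin_cases j
  · simp [div_mul_cancel₀ _ he']
  · have hA01 : A 0 1 = (A 0 0 - A 1 1) / (e - 1) * f := by
      rw [div_mul_eq_mul_div, eq_div_iff he']
      linear_combination -h01
    simpa using hA01
  · simp [hA10]
  · simp

theorem commute_of_commute_triangular {e f : K} (he : e ≠ 1) {A B : Matrix (Fin 2) (Fin 2) K}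
    (hA : Commute A !![e, f; 0, 1]) (hB : Commute B !![e, f; 0, 1]) : Commute A B := by
  rw [eq_smul_one_add_smul_of_commute_triangular he hA,
    eq_smul_one_add_smul_of_commute_triangular he hB]
  exact ((Commute.one_left _).smul_left _).add_left
    (((Commute.one_right _).smul_right _).add_right ((Commute.refl _).smul_left _ |>.smul_right _))

namespace GeneralLinearGroup

theorem val_sq_of_val_eq {T : GL (Fin 2) K} {a b : K} (hT : T.val = !![a, b; 0, 1]) :
    (T ^ 2).val = !![a ^ 2, a * b + b; 0, 1] := by
  rw [sq, Units.val_mul, hT]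
  ext i j
  fin_cases i <;> fin_cases j <;> simp [sq]

theorem eq_neg_one_of_commute_sq {T m : GL (Fin 2) K} {a b : K} (hT : T.val = !![a, b; 0, 1])
    (ha : a ≠ 1) (hm : Commute m (T ^ 2)) (hmT : ¬ Commute m T) : a = -1 := by
  by_contra ha'
  have hsq := val_sq_of_val_eq hT
  refine hmT (Commute.units_of_val ?_)
  refine commute_of_commute_triangular (sq_ne_one_iff.mpr ⟨ha, ha'⟩) (f := a * b + b) ?_ ?_
  · exact hsq ▸ hm.units_val
  · exact hsq ▸ (Commute.self_pow T 2).units_val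

theorem sq_eq_one_of_val_eq {T : GL (Fin 2) K} {b : K} (hT : T.val = !![-1, b; 0, 1]) :
    T ^ 2 = 1 := by
  ext i j
  rw [val_sq_of_val_eq hT]
  fin_cases i <;> fin_cases j <;> simp

end GeneralLinearGroup

end Matrix

open Subgroup Matrix.GeneralLinearGroup in
theorem stmt19_general (ℓ : ℕ) [Fact ℓ.Prime] (p : ℕ) (hp : p.Prime) (hodd : Odd p)
    (C N G H : Subgroup (GL (Fin 2) (ZMod ℓ)))
    (hCab : ∀ a ∈ C, ∀ b ∈ C, a * b = b * a)
    (hNnorm : N = Subgroup.normalizer (C : Set (GL (Fin 2) (ZMod ℓ)))) (hNC : C.relIndex N = 2)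
    (hGN : G ≤ N) (hGnonab : ¬ ∀ a ∈ G, ∀ b ∈ G, a * b = b * a)
    (hHG : H ≤ G)
    (hindex : H.relIndex G = p)
    (h₀ : GL (Fin 2) (ZMod ℓ)) (a₀ b₀ : ZMod ℓ)
    (hgen : H = Subgroup.closure {h₀})
    (hmat : h₀.val = !![a₀, b₀; 0, 1]) (ha₀ : a₀ ≠ 1) :
    a₀ = -1 ∧ Nat.card H = 2 ∧ Nat.card (G ⊓ C : Subgroup (GL (Fin 2) (ZMod ℓ))) = p ∧
      G = (G ⊓ C) ⊔ H ∧
      (∀ h ∈ H, h ≠ 1 → ∀ m ∈ G ⊓ C, h * m * h⁻¹ = m⁻¹) ∧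
      (∀ g ∈ G, g.val.det = 1 ∨ g.val.det = -1) ∧
      (∃ g ∈ G, g.val.det = -1) := by
  subst hNnorm
  have : Fact p.Prime := ⟨hp⟩
  set M := G ⊓ C
  have hH : H = zpowers h₀ := hgen.trans (zpowers_eq_closure h₀).symm
  have hh₀G : h₀ ∈ G := hHG (hH ▸ mem_zpowers h₀)
  have hMG : M.relIndex G = 2 := inf_relIndex_eq_two hNC hGN
    fun hGC ↦ hGnonab fun a ha b hb ↦ hCab a (hGC ha) b (hGC hb)
  have hG : M ⊔ H = G := sup_eq_of_coprime_relIndex inf_le_left hHG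
    (by rw [hMG, hindex]; exact Nat.coprime_two_left.mpr hodd)
  have hnc : h₀ ∉ centralizer (M : Set _) := fun hc ↦ hGnonab fun a ha b hb ↦ by
    rw [← hG, hH] at ha hb
    have hMab : M ≤ centralizer (M : Set _) := fun x hx ↦
      mem_centralizer_iff.mpr fun y hy ↦ hCab y hy.2 x hx.2
    exact mem_centralizer_iff.mp (le_centralizer_sup_zpowers hMab hc hb) a ha
  obtain ⟨c, hc, hch₀⟩ : ∃ c ∈ M, ¬ Commute c h₀ := by
    simpa [mem_centralizer_iff, commute_iff_eq] using hnc
  have ha : a₀ = -1 := eq_neg_one_of_commute_sq hmat ha₀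
    (hCab _ hc.2 _ (sq_mem_of_relIndex_normalizer_eq_two hNC (hGN hh₀G))) hch₀
  have hh₀ : h₀ ^ 2 = 1 := sq_eq_one_of_val_eq (ha ▸ hmat)
  have horder : orderOf h₀ = 2 := orderOf_eq_prime hh₀ fun h ↦ ha₀ <| by
    simpa [h] using (congrFun (congrFun hmat 0) 0).symm
  have hcardH : Nat.card H = 2 := hH ▸ (Nat.card_zpowers h₀).trans horder
  have hcardM : Nat.card M = p := by
    have hcardG := card_mul_relIndex hHG
    rw [hcardH, hindex, ← card_mul_relIndex (H := M) inf_le_left, hMG] at hcardG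
    omega
  have hinv : ∀ m ∈ M, h₀ * m * h₀⁻¹ = m⁻¹ := fun m hm ↦ conj_eq_inv_of_card_eq_prime hcardM hh₀
    (inf_normalizer_le_normalizer_inf ⟨le_normalizer hh₀G, hGN hh₀G⟩) hnc hm
  have hdeth₀ : h₀.val.det = -1 := by rw [hmat, Matrix.det_fin_two_of, ha]; ring
  have hdetM : ∀ m ∈ M, det m = 1 := fun m hm ↦ det.map_eq_one_of_conj_eq_inv hodd (hinv m hm)
    (orderOf_dvd_iff_pow_eq_one.mp (hcardM ▸ M.orderOf_dvd_natCard hm))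
  have hdetG : G ≤ (rootsOfUnity 2 (ZMod ℓ)).comap det := hG ▸ sup_le
    (fun m hm ↦ by simp [hdetM m hm]) (hH ▸ zpowers_le.mpr
      (by rw [mem_comap, mem_rootsOfUnity', val_det_apply, hdeth₀]; norm_num))
  refine ⟨ha, hcardH, hcardM, hG.symm, fun h hh hne m hm ↦ ?_, fun g hg ↦ ?_, h₀, hh₀G, hdeth₀⟩
  · exact eq_of_mem_zpowers_of_sq_eq_one hh₀ (hH ▸ hh) hne ▸ hinv m hm
  · have := hdetG hg
    rwa [mem_comap, mem_rootsOfUnity', val_det_apply, sq_eq_one_iff] at this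

/-- Let `G` be a non-abelian subgroup of the normalizer `N` of a Cartan
subgroup `C` of `GL₂(𝔽_ℓ)` with `[N : C] = 2`, and `H ≤ G` a non-normal cyclic subgroup of odd
prime index `p = [G : H]` with `ℓ ∤ |H|`, generated by a matrix `!![a₀, b₀; 0, 1]` with
`a₀ ≠ 1`. Then `a₀ = −1`, `|H| = 2`, `|G ∩ C| = p`, `G` is the (internal) semidirect product
of `H` acting on `M = G ∩ C` by inversion, and `det G = {±1}`. -/
theorem stmt19 (ℓ : ℕ) [Fact ℓ.Prime] (p : ℕ) (hp : p.Prime) (hodd : Odd p)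
    (C N G H : Subgroup (GL (Fin 2) (ZMod ℓ)))
    (hCab : ∀ a ∈ C, ∀ b ∈ C, a * b = b * a)
    (hCN : C ≤ N) (hNnorm : N = Subgroup.normalizer (C : Set (GL (Fin 2) (ZMod ℓ)))) (hNC : C.relIndex N = 2)
    (hlN : ¬ ℓ ∣ Nat.card N)
    (hGN : G ≤ N) (hGnonab : ¬ ∀ a ∈ G, ∀ b ∈ G, a * b = b * a)
    (hHG : H ≤ G)
    (hHnotnormal : ¬ ∀ g ∈ G, ∀ h ∈ H, g * h * g⁻¹ ∈ H)
    (hindex : H.relIndex G = p)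
    (hlH : ¬ ℓ ∣ Nat.card H)
    (h₀ : GL (Fin 2) (ZMod ℓ)) (a₀ b₀ : ZMod ℓ)
    (hgen : H = Subgroup.closure {h₀})
    (hmat : h₀.val = !![a₀, b₀; 0, 1]) (ha₀ : a₀ ≠ 1) :
    a₀ = -1 ∧ Nat.card H = 2 ∧ Nat.card (G ⊓ C : Subgroup (GL (Fin 2) (ZMod ℓ))) = p ∧
      G = (G ⊓ C) ⊔ H ∧
      (∀ h ∈ H, h ≠ 1 → ∀ m ∈ G ⊓ C, h * m * h⁻¹ = m⁻¹) ∧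
      (∀ g ∈ G, g.val.det = 1 ∨ g.val.det = -1) ∧
      (∃ g ∈ G, g.val.det = -1) :=
  stmt19_general ℓ p hp hodd C N G H hCab hNnorm hNC hGN hGnonab hHG hindex h₀ a₀ b₀ hgen hmat ha₀
end
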